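/- arXiv:2004.06367 — 2 statements merged into one kernel-verified Lean document; each statement's English description precedes it below -/
import Mathlib

section
/- Let H be a feasible mono-block 2-augmented chemical graph with respect to bounds (g_ℓ, g_u), i.e., g_ℓ ≤ f(H) ≤ g_u and res(v) ≥ 0 for all v. Define g†_ℓ by: g†_ℓ[t] = g_ℓ[t] for colored sequences t of length 0; g†_ℓ[t] = max{0, g_ℓ[t] − 1} for t = (c,m,c') of length 1 with c ≠ c'; g†_ℓ[t] = max{0, g_ℓ[t] − 2} for t = (c,m,c) of length 1; and g†_ℓ[t] = 0 for all longer t. Then for each junction pair {x,y} of H, the graph H − xy obtained by removing all edges between x and y is a monocyclic graph satisfying g†_ℓ ≤ f(H − xy) ≤ g_u with res(v) ≥ 0 for all its vertices. -/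
structure CMGraph (V S : Type) where
  mul : V → V → ℕ
  symm : ∀ u v, mul u v = mul v u
  loopless : ∀ v, mul v v = 0
  col : V → S

namespace CMGraph

variable {V V' S : Type}

def toSimple (G : CMGraph V S) : SimpleGraph V where
  Adj u v := 0 < G.mul u v
  symm := ⟨fun u v (h : 0 < G.mul u v) => show 0 < G.mul v u by rwa [G.symm v u]⟩
  loopless := ⟨fun v (h : 0 < G.mul v v) => by simp [G.loopless] at h⟩

def CycleEdge (G : CMGraph V S) (e : Sym2 V) : Prop :=
  ∃ (w : V) (c : G.toSimple.Walk w w), c.IsCycle ∧ e ∈ c.edges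

def OnAllCycles (G : CMGraph V S) (v : V) : Prop :=
  ∀ (w : V) (c : G.toSimple.Walk w w), c.IsCycle → v ∈ c.support

def cycleVerts (G : CMGraph V S) : Set V :=
  {v | ∃ (w : V) (c : G.toSimple.Walk w w), c.IsCycle ∧ v ∈ c.support}

def Connected (G : CMGraph V S) : Prop := G.toSimple.Connected

def IsKAugTree (G : CMGraph V S) (k : ℕ) : Prop :=
  G.Connected ∧ G.toSimple.edgeSet.ncard = (Nat.card V - 1) + k

def Monocyclic (G : CMGraph V S) : Prop :=
  G.Connected ∧ ∃ (w : V) (c : G.toSimple.Walk w w), c.IsCycle ∧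
    ∀ (w' : V) (c' : G.toSimple.Walk w' w'), c'.IsCycle →
      {e | e ∈ c'.edges} = {e | e ∈ c.edges}

def OnCommonCycle (G : CMGraph V S) (u v : V) : Prop :=
  ∃ (w : V) (c : G.toSimple.Walk w w), c.IsCycle ∧ u ∈ c.support ∧ v ∈ c.support

def IsBlock (G : CMGraph V S) (X : Set V) : Prop :=
  (∀ u ∈ X, ∀ v ∈ X, u ≠ v → G.OnCommonCycle u v) ∧
  ∀ Y : Set V, X ⊆ Y → (∀ u ∈ Y, ∀ v ∈ Y, u ≠ v → G.OnCommonCycle u v) → Y = X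

def MonoBlock (G : CMGraph V S) : Prop :=
  ∃! X : Set V, G.IsBlock X ∧ 2 ≤ X.ncard

def IsMB2AT (G : CMGraph V S) : Prop := G.IsKAugTree 2 ∧ G.MonoBlock

def IsJunction (G : CMGraph V S) (v : V) : Prop :=
  v ∈ G.cycleVerts ∧ G.OnAllCycles v

def deg (G : CMGraph V S) [Fintype V] (v : V) : ℕ := ∑ u, G.mul v u

def res (G : CMGraph V S) [Fintype V] (val : S → ℕ) (v : V) : ℕ :=
  val (G.col v) - G.deg v

def addMul (G : CMGraph V S) [DecidableEq V] (x y : V) (p : ℕ) (hxy : x ≠ y) :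
    CMGraph V S where
  mul u v := if (u = x ∧ v = y) ∨ (u = y ∧ v = x) then G.mul u v + p else G.mul u v
  symm := by
    intro u v
    try dsimp only
    by_cases h : (u = x ∧ v = y) ∨ (u = y ∧ v = x)
    · rw [if_pos h, if_pos (by tauto)]
      try rw [G.symm u v]
    · rw [if_neg h, if_neg (by tauto)]
      try rw [G.symm u v]
  loopless := by
    intro v
    try dsimp only
    have h1 : ¬((v = x ∧ v = y) ∨ (v = y ∧ v = x)) := by
      rintro (⟨h1, h2⟩ | ⟨h1, h2⟩)
      · exact hxy (h1.symm.trans h2)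
      · exact hxy (h2.symm.trans h1)
    rw [if_neg h1, G.loopless]
  col := G.col

def removePair (G : CMGraph V S) [DecidableEq V] (x y : V) : CMGraph V S where
  mul u v := if (u = x ∧ v = y) ∨ (u = y ∧ v = x) then 0 else G.mul u v
  symm := by
    intro u v
    try dsimp only
    by_cases h : (u = x ∧ v = y) ∨ (u = y ∧ v = x)
    · rw [if_pos h, if_pos (by tauto)]
      try rw [G.symm u v]
    · rw [if_neg h, if_neg (by tauto)]
      try rw [G.symm u v]
  loopless := by
    intro v
    try dsimp only
    by_cases h : (v = x ∧ v = y) ∨ (v = y ∧ v = x)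
    · simp [h]
    · simp [h, G.loopless]
  col := G.col

def delCyc (G : CMGraph V S) : SimpleGraph V :=
  G.toSimple.deleteEdges {e | G.CycleEdge e}

def pend (G : CMGraph V S) (v : V) : Set V := {u | G.delCyc.Reachable v u}

def subAt (G : CMGraph V S) (v0 u : V) : Set V :=
  {w | w ∈ G.pend v0 ∧ ∀ p : G.delCyc.Walk v0 w, p.IsPath → u ∈ p.support}

def ParentIn (G : CMGraph V S) (v0 z u : V) : Prop :=
  G.delCyc.Adj z u ∧ u ∈ G.subAt v0 z ∧ u ≠ v0

def Avoids (G : CMGraph V S) {u v w : V} (p : G.toSimple.Walk u v)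
    (c : G.toSimple.Walk w w) : Prop :=
  p.IsPath ∧ ∀ e ∈ p.edges, e ∉ c.edges

end CMGraph

def CMIso {V V' S : Type} (G : CMGraph V S) (G' : CMGraph V' S) : Prop :=
  ∃ ψ : V ≃ V', (∀ v, G'.col (ψ v) = G.col v) ∧ ∀ u v, G'.mul (ψ u) (ψ v) = G.mul u v

namespace CMGraph

/-- The colored sequence of multiplicities/colors along a walk (excluding the
color of the starting vertex). -/
def gammaList {V S : Type} (G : CMGraph V S) :
    {u v : V} → G.toSimple.Walk u v → List (ℕ × S)
  | _, _, SimpleGraph.Walk.nil => []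
  | u, _, SimpleGraph.Walk.cons (v := b) _ p =>
      (G.mul u b, G.col b) :: G.gammaList p

/-- The frequency of a colored sequence `t`: the number of vertex-rooted paths
in `G` whose colored sequence is `t`. -/
noncomputable def frq {V S : Type} (G : CMGraph V S) (t : S × List (ℕ × S)) : ℕ :=
  Set.ncard {x : (u : V) × (v : V) × G.toSimple.Walk u v |
    x.2.2.IsPath ∧ (G.col x.1, G.gammaList x.2.2) = t}

end CMGraph

/-- The modified lower bound vector g†. -/
def gdag {S : Type} [DecidableEq S] (gl : S × List (ℕ × S) → ℕ) :
    S × List (ℕ × S) → ℕ :=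
  fun t => match t.2 with
    | [] => gl t
    | [(_, c')] => if t.1 = c' then gl t - 2 else gl t - 1
    | _ => 0

/-! The edge `xy` lies on a cycle, so it is not a bridge: deleting it keeps the graph connected
and lowers the number of edges by one. Deleting edges only lowers degrees, and every rooted path
of `H - xy` is a rooted path of `H` with the same colored sequence, which gives the upper bounds.
For the lower bounds, rooted paths of length 0 are the vertices, which are untouched, and rooted
paths of length 1 are the ordered adjacent pairs, of which only `(x, y)` and `(y, x)` disappear;
when `c ≠ c'` at most one of them has colors `(c, c')`. -/

section

open SimpleGraph

variable {V S : Type}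

namespace CMGraph

lemma toSimple_removePair [DecidableEq V] (G : CMGraph V S) (x y : V) :
    (G.removePair x y).toSimple = G.toSimple.deleteEdges {s(x, y)} := by
  ext u v
  simp only [toSimple, removePair, deleteEdges_adj, Set.mem_singleton_iff, Sym2.eq_iff]
  split_ifs with h <;> simp [h]

lemma removePair_mul_le [DecidableEq V] (G : CMGraph V S) (x y u v : V) :
    (G.removePair x y).mul u v ≤ G.mul u v := by
  simp only [removePair]
  split <;> omega

lemma removePair_mul_of_pos [DecidableEq V] (G : CMGraph V S) {x y u v : V}
    (h : 0 < (G.removePair x y).mul u v) : G.mul u v = (G.removePair x y).mul u v := by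
  simp only [removePair] at h ⊢
  split_ifs at h ⊢ <;> omega

lemma deg_removePair_le [Fintype V] [DecidableEq V] (G : CMGraph V S) (x y v : V) :
    (G.removePair x y).deg v ≤ G.deg v :=
  Finset.sum_le_sum fun u _ => G.removePair_mul_le x y v u

lemma toSimple_le_of_mul_eq {G G' : CMGraph V S}
    (hmul : ∀ u v, 0 < G'.mul u v → G.mul u v = G'.mul u v) : G'.toSimple ≤ G.toSimple :=
  fun u v (h : 0 < G'.mul u v) => show 0 < G.mul u v from hmul u v h ▸ h

lemma gammaList_mapLe {G G' : CMGraph V S} (hcol : G'.col = G.col)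
    (hmul : ∀ u v, 0 < G'.mul u v → G.mul u v = G'.mul u v) {u v : V}
    (p : G'.toSimple.Walk u v) :
    G.gammaList (p.mapLe (toSimple_le_of_mul_eq hmul)) = G'.gammaList p := by
  induction p with
  | nil => rfl
  | @cons a b _ hab p ih =>
    simp only [Walk.mapLe, Walk.map_cons] at ih ⊢
    simp only [gammaList, ih, hcol]
    show (G.mul a b, G.col b) :: _ = _
    rw [hmul a b hab]

lemma finite_setOf_isPath [Finite V] (G : SimpleGraph V) :
    {z : (u : V) × (v : V) × G.Walk u v | z.2.2.IsPath}.Finite := by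
  classical
  have := Fintype.ofFinite V
  refine (Set.finite_range fun z : (u : V) × (v : V) × G.Path u v =>
    (⟨z.1, z.2.1, z.2.2.1⟩ : (u : V) × (v : V) × G.Walk u v)).subset ?_
  rintro ⟨u, v, p⟩ hp
  exact ⟨⟨u, v, p, hp⟩, rfl⟩

lemma frq_le_of_mul_eq [Finite V] {G G' : CMGraph V S} (hcol : G'.col = G.col)
    (hmul : ∀ u v, 0 < G'.mul u v → G.mul u v = G'.mul u v) (t : S × List (ℕ × S)) :
    G'.frq t ≤ G.frq t := by
  have hle := toSimple_le_of_mul_eq hmul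
  refine Set.ncard_le_ncard_of_injOn
    (fun z => ⟨z.1, z.2.1, z.2.2.mapLe hle⟩) ?_ ?_
    ((finite_setOf_isPath _).subset fun _ h => h.1)
  · rintro ⟨u, v, p⟩ ⟨hp, rfl⟩
    exact ⟨hp.mapLe hle, by rw [gammaList_mapLe hcol hmul, hcol]⟩
  · rintro ⟨u, v, p⟩ _ ⟨u', v', p'⟩ _ h
    simp only [Sigma.mk.injEq] at h
    obtain ⟨rfl, h⟩ := h
    obtain ⟨rfl, h⟩ := Sigma.mk.inj_iff.mp (eq_of_heq h)
    rw [Walk.map_injective_of_injective Function.injective_id u v (eq_of_heq h)]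

lemma frq_removePair_le [Finite V] [DecidableEq V] (G : CMGraph V S) (x y : V)
    (t : S × List (ℕ × S)) : (G.removePair x y).frq t ≤ G.frq t :=
  frq_le_of_mul_eq (G := G) (G' := G.removePair x y) rfl
    (fun _ _ h => G.removePair_mul_of_pos h) t

lemma eq_nil_of_gammaList_eq_nil (G : CMGraph V S) {u v : V} {p : G.toSimple.Walk u v}
    (hp : G.gammaList p = []) :
    (⟨u, v, p⟩ : (u : V) × (v : V) × G.toSimple.Walk u v) = ⟨u, u, Walk.nil⟩ := by
  cases p with
  | nil => rfl
  | cons => simp [gammaList] at hp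

lemma eq_cons_nil_of_gammaList_eq_singleton (G : CMGraph V S) {u v : V}
    {p : G.toSimple.Walk u v} {a : ℕ × S} (hp : G.gammaList p = [a]) :
    ∃ h : G.toSimple.Adj u v, p = h.toWalk := by
  cases p with
  | nil => simp [gammaList] at hp
  | cons h q =>
    cases q with
    | nil => exact ⟨h, rfl⟩
    | cons => simp [gammaList] at hp

lemma frq_nil (G : CMGraph V S) (c : S) : G.frq (c, []) = {v | G.col v = c}.ncard := by
  refine Set.ncard_congr (fun z _ => z.1) (fun z hz => (Prod.mk.inj hz.2).1) ?_ ?_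
  · rintro ⟨u, v, p⟩ ⟨u', v', p'⟩ ⟨-, hz⟩ ⟨-, hz'⟩ (rfl : u = u')
    rw [G.eq_nil_of_gammaList_eq_nil (Prod.mk.inj hz).2,
      G.eq_nil_of_gammaList_eq_nil (Prod.mk.inj hz').2]
  · intro v hv
    exact ⟨⟨v, v, Walk.nil⟩, ⟨Walk.IsPath.nil, by simpa [gammaList] using hv⟩, rfl⟩

def coloredPairs (G : CMGraph V S) (c : S) (m : ℕ) (c' : S) : Set (V × V) :=
  {p | 0 < G.mul p.1 p.2 ∧ G.col p.1 = c ∧ G.mul p.1 p.2 = m ∧ G.col p.2 = c'}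

lemma frq_singleton (G : CMGraph V S) (c : S) (m : ℕ) (c' : S) :
    G.frq (c, [(m, c')]) = (G.coloredPairs c m c').ncard := by
  refine Set.ncard_congr (fun z _ => (z.1, z.2.1)) ?_ ?_ ?_
  · rintro ⟨u, v, p⟩ ⟨-, hz⟩
    dsimp only at hz ⊢
    obtain ⟨h, rfl⟩ := G.eq_cons_nil_of_gammaList_eq_singleton (Prod.mk.inj hz).2
    simp only [gammaList, Prod.mk.injEq, List.cons.injEq] at hz
    exact ⟨h, hz.1, hz.2.1.1, hz.2.1.2⟩
  · rintro ⟨u, v, p⟩ ⟨u', v', p'⟩ ⟨-, hz⟩ ⟨-, hz'⟩ h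
    dsimp only at hz hz' h
    obtain ⟨rfl, rfl⟩ := Prod.mk.inj h
    obtain ⟨h, rfl⟩ := G.eq_cons_nil_of_gammaList_eq_singleton (Prod.mk.inj hz).2
    obtain ⟨h', rfl⟩ := G.eq_cons_nil_of_gammaList_eq_singleton (Prod.mk.inj hz').2
    rfl
  · rintro ⟨u, v⟩ ⟨h, hc, hm, hc'⟩
    have hadj : G.toSimple.Adj u v := h
    exact ⟨⟨u, v, hadj.toWalk⟩, ⟨hadj.isPath_toWalk, by simp [gammaList, hc, hm, hc']⟩,
      rfl⟩

lemma coloredPairs_removePair [DecidableEq V] (G : CMGraph V S) (x y : V) (c : S) (m : ℕ)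
    (c' : S) :
    (G.removePair x y).coloredPairs c m c' = G.coloredPairs c m c' \ {(x, y), (y, x)} := by
  ext ⟨u, v⟩
  simp only [coloredPairs, removePair, Set.mem_ofPred_eq, Set.mem_sdiff, Set.mem_insert_iff,
    Set.mem_singleton_iff, Prod.mk.injEq]
  split_ifs <;> grind

lemma ncard_coloredPairs_le_removePair [Finite V] [DecidableEq V] [DecidableEq S]
    (G : CMGraph V S) (x y : V) (c : S) (m : ℕ) (c' : S) :
    (G.coloredPairs c m c').ncard ≤
      ((G.removePair x y).coloredPairs c m c').ncard + if c = c' then 2 else 1 := by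
  have hsplit := Set.ncard_inter_add_ncard_sdiff_eq_ncard (G.coloredPairs c m c') {(x, y), (y, x)}
  have hremoved :
      (G.coloredPairs c m c' ∩ {(x, y), (y, x)}).ncard ≤ if c = c' then 2 else 1 := by
    split_ifs with hcc
    · exact (Set.ncard_le_ncard Set.inter_subset_right).trans
        ((Set.ncard_insert_le _ _).trans (by simp))
    · refine (Set.ncard_le_one).mpr ?_
      rintro a ⟨ha, ha'⟩ b ⟨hb, hb'⟩
      rcases ha' with rfl | rfl <;> rcases hb' with rfl | rfl
      all_goals first | rfl | exact absurd (ha.2.1.symm.trans hb.2.2.2) hcc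
  rw [coloredPairs_removePair]
  omega

end CMGraph

open CMGraph in
lemma gdag_le_frq_removePair [Finite V] [DecidableEq V] [DecidableEq S] (G : CMGraph V S)
    (gl : S × List (ℕ × S) → ℕ) (x y : V) (t : S × List (ℕ × S))
    (h : gl t ≤ G.frq t) :
    gdag gl t ≤ (G.removePair x y).frq t := by
  obtain ⟨c, _ | ⟨⟨m, c'⟩, _ | ⟨_, l⟩⟩⟩ := t
  · rw [frq_nil] at h ⊢
    exact h
  · have := G.ncard_coloredPairs_le_removePair x y c m c'
    rw [frq_singleton] at h ⊢
    show (if c = c' then _ else _) ≤ _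
    split_ifs at this ⊢ <;> omega
  · exact Nat.zero_le _

end

theorem junction_pair_removal_feasible_general {V S : Type} [Fintype V] [DecidableEq V]
    [DecidableEq S] (H : CMGraph V S) (val : S → ℕ) (K : ℕ)
    (gl gu : S × List (ℕ × S) → ℕ)
    (hmb : H.IsMB2AT)
    (hres : ∀ v : V, H.deg v ≤ val (H.col v))
    (hbound : ∀ t : S × List (ℕ × S), t.2.length ≤ K →
      gl t ≤ H.frq t ∧ H.frq t ≤ gu t)
    (x y : V)
    (hn : ∃ (w : V) (c : H.toSimple.Walk w w), c.IsCycle ∧ s(x, y) ∈ c.edges) :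
    (H.removePair x y).IsKAugTree 1 ∧
    (∀ v : V, (H.removePair x y).deg v ≤ val ((H.removePair x y).col v)) ∧
    (∀ t : S × List (ℕ × S), t.2.length ≤ K →
      gdag gl t ≤ (H.removePair x y).frq t ∧ (H.removePair x y).frq t ≤ gu t) := by
  obtain ⟨⟨hconn, hcard⟩, -⟩ := hmb
  obtain ⟨w, cyc, hcyc, hxy⟩ := hn
  refine ⟨⟨?_, ?_⟩, fun v => (H.deg_removePair_le x y v).trans (hres v), fun t ht =>
    ⟨gdag_le_frq_removePair H gl x y t (hbound t ht).1,
      (H.frq_removePair_le x y t).trans (hbound t ht).2⟩⟩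
  · rw [CMGraph.Connected, CMGraph.toSimple_removePair]
    exact hconn.connected_delete_edge_of_not_isBridge fun hb => hb.notMem_edges_of_isCycle hcyc hxy
  · rw [CMGraph.toSimple_removePair, SimpleGraph.edgeSet_deleteEdges,
      Set.ncard_sdiff_singleton_of_mem (cyc.edges_subset_edgeSet hxy), hcard]
    omega

/-- Removing all edges of a junction pair from a feasible mono-block
2-augmented tree yields a monocyclic graph feasible for (g†, gu). -/
theorem junction_pair_removal_feasible {V S : Type} [Fintype V] [DecidableEq V]
    [DecidableEq S] (H : CMGraph V S) (val : S → ℕ) (K : ℕ)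
    (gl gu : S × List (ℕ × S) → ℕ)
    (hmb : H.IsMB2AT)
    (hres : ∀ v : V, H.deg v ≤ val (H.col v))
    (hbound : ∀ t : S × List (ℕ × S), t.2.length ≤ K →
      gl t ≤ H.frq t ∧ H.frq t ≤ gu t)
    (x y : V) (hj : H.IsJunction x)
    (hn : ∃ (w : V) (c : H.toSimple.Walk w w), c.IsCycle ∧ s(x, y) ∈ c.edges) :
    (H.removePair x y).IsKAugTree 1 ∧
    (∀ v : V, (H.removePair x y).deg v ≤ val ((H.removePair x y).col v)) ∧
    (∀ t : S × List (ℕ × S), t.2.length ≤ K →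
      gdag gl t ≤ (H.removePair x y).frq t ∧ (H.removePair x y).frq t ≤ gu t) :=
  junction_pair_removal_feasible_general H val K gl gu hmb hres hbound x y hn
end

section
/- Let H be a mono-block 2-augmented tree with junctions u and v chosen so that (code(u), code*(u)) ≼ (code(v), code*(v)) lexicographically, with strict inequality. If C* is the cycle of H minimizing code(P(u,v;C*)) lexicographically among the three cycles, then the path P(u,v;C*) has length at least 2 (it is not a single edge uv). -/
def listLe (a b : List ℕ) : Prop := a = b ∨ List.Lex (· < ·) a b

def listListLe (a b : List (List ℕ)) : Prop :=
  a = b ∨ List.Lex (List.Lex (· < ·)) a b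

namespace CMGraph

variable {V S : Type}

/-- Rooted isomorphism between the pendent trees of `x` and `y` in `G`. -/
def PendIso (G : CMGraph V S) (x y : V) : Prop :=
  ∃ φ : V → V, Set.BijOn φ (G.pend x) (G.pend y) ∧ φ x = y ∧
    (∀ u ∈ G.pend x, G.col (φ u) = G.col u) ∧
    (∀ u ∈ G.pend x, ∀ v ∈ G.pend x, G.mul (φ u) (φ v) = G.mul u v)

/-- `r` ranks the pendent trees of `G`: equal ranks exactly for
rooted-isomorphic pendent trees. -/
def RankSpec (G : CMGraph V S) (r : V → ℕ) : Prop :=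
  ∀ u ∈ G.cycleVerts, ∀ v ∈ G.cycleVerts, (r u = r v ↔ G.PendIso u v)

/-- code(w) = (|V(G⟨w⟩)|, col(w), deg(w), rank(G⟨w⟩)), ordered lexicographically. -/
noncomputable def codeT (G : CMGraph V S) [Fintype V] (r : V → ℕ) (w : V) :
    ℕ ×ₗ (S ×ₗ (ℕ ×ₗ ℕ)) :=
  toLex ((G.pend w).ncard, toLex (G.col w, toLex (G.deg w, r w)))

def altCode (G : CMGraph V S) (r : V → ℕ) : List V → List ℕ
  | [] => []
  | [w] => [r w]
  | w :: w' :: rest => r w :: G.mul w w' :: altCode G r (w' :: rest)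

/-- n(P): total number of vertices in pendent trees at internal vertices of `p`. -/
noncomputable def npend (G : CMGraph V S) [Fintype V] {u v : V} (p : G.toSimple.Walk u v) : ℕ :=
  (((p.support.drop 1).dropLast).map (fun w => (G.pend w).ncard)).sum

/-- code(P(u,v;C)) as a sequence of naturals. -/
noncomputable def pathCode (G : CMGraph V S) [Fintype V] (r : V → ℕ) {u v : V}
    (p : G.toSimple.Walk u v) : List ℕ :=
  (Nat.card V - G.npend p) :: p.length :: G.altCode r p.support

/-- `L` is code*(u): the codes of the three paths `P(u,v;C_i)` arranged
in non-ascending lexicographical order. -/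
def CodeStarOf (G : CMGraph V S) [Fintype V] (r : V → ℕ) (u v : V)
    (L : List (List ℕ)) : Prop :=
  ∃ (w₁ w₂ w₃ : V) (c₁ : G.toSimple.Walk w₁ w₁) (c₂ : G.toSimple.Walk w₂ w₂)
    (c₃ : G.toSimple.Walk w₃ w₃) (p₁ p₂ p₃ : G.toSimple.Walk u v),
    c₁.IsCycle ∧ c₂.IsCycle ∧ c₃.IsCycle ∧
    ({e | e ∈ c₁.edges} ≠ {e | e ∈ c₂.edges}) ∧
    ({e | e ∈ c₁.edges} ≠ {e | e ∈ c₃.edges}) ∧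
    ({e | e ∈ c₂.edges} ≠ {e | e ∈ c₃.edges}) ∧
    G.Avoids p₁ c₁ ∧ G.Avoids p₂ c₂ ∧ G.Avoids p₃ c₃ ∧
    L.Perm [G.pathCode r p₁, G.pathCode r p₂, G.pathCode r p₃] ∧
    L.Pairwise (fun a b => listLe b a)

/-- (code(u), code*(u)) ≼ (code(v), code*(v)) lexicographically. -/
def JCodeLe (G : CMGraph V S) [Fintype V] [LinearOrder S] (r : V → ℕ) (u v : V) :
    Prop :=
  G.codeT r u < G.codeT r v ∨
  (G.codeT r u = G.codeT r v ∧
    ∀ Lu Lv, G.CodeStarOf r u v Lu → G.CodeStarOf r v u Lv → listListLe Lu Lv)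

/-- (code(u), code*(u)) ≺ (code(v), code*(v)) strictly. -/
def JCodeLt (G : CMGraph V S) [Fintype V] [LinearOrder S] (r : V → ℕ) (u v : V) :
    Prop :=
  G.codeT r u < G.codeT r v ∨
  (G.codeT r u = G.codeT r v ∧
    ∃ Lu Lv, G.CodeStarOf r u v Lu ∧ G.CodeStarOf r v u Lv ∧
      List.Lex (List.Lex (· < ·)) Lu Lv)

/-- `P` is the parent of the mono-block 2-augmented tree `H`: delete all edges
between the lexicographically smaller junction `u` and its neighbor on the
avoiding path with lexicographically minimum code. -/
def ParentRel (H P : CMGraph V S) [Fintype V] [DecidableEq V] [LinearOrder S]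
    (r : V → ℕ) : Prop :=
  ∃ u v : V, u ≠ v ∧ H.IsJunction u ∧ H.IsJunction v ∧ H.JCodeLe r u v ∧
    ∃ (w : V) (c : H.toSimple.Walk w w) (p : H.toSimple.Walk u v),
      c.IsCycle ∧ H.Avoids p c ∧
      (∀ (w' : V) (c' : H.toSimple.Walk w' w') (p' : H.toSimple.Walk u v),
        c'.IsCycle → H.Avoids p' c' → listLe (H.pathCode r p) (H.pathCode r p')) ∧
      P = H.removePair u (p.getVert 1)

/-- `H` is a child of `G`: the parent of `H` is isomorphic to `G`. -/
def IsChildOf (H G : CMGraph V S) [Fintype V] [DecidableEq V] [LinearOrder S]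
    (r : V → ℕ) : Prop :=
  ∃ P : CMGraph V S, ParentRel H P r ∧ CMIso P G

end CMGraph

/-!
If `P(u,v;C*)` were the single edge `uv`, this edge would be a chord of `C*`, since junctions
lie on every cycle. The chord closes a new cycle with one `u`–`v` arc of `C*`, and the other
arc avoids that cycle and has an internal vertex. Its code therefore starts with
`n - n(P) < n`, while the edge has no internal vertices and its code starts with `n`,
contradicting the minimality of `code(P(u,v;C*))`.
-/

lemma head_le_of_listLe_cons {a b : ℕ} {s t : List ℕ} (h : listLe (a :: s) (b :: t)) :
    a ≤ b := by
  rcases h with h | h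
  · exact (List.cons.inj h).1.le
  · cases h with
    | cons _ => exact le_rfl
    | rel hab => exact hab.le

namespace SimpleGraph.Walk

variable {V : Type} {G : SimpleGraph V}

lemma mk_mem_edges_of_length_eq_one {u v : V} :
    ∀ {p : G.Walk u v}, p.length = 1 → s(u, v) ∈ p.edges
  | cons _ nil, _ => by simp

variable [DecidableEq V]

lemma IsCycle.exists_isPath_append_isCycle {x u v : V} {c : G.Walk x x} (hc : c.IsCycle)
    (hu : u ∈ c.support) (hv : v ∈ c.support) (huv : u ≠ v) :
    ∃ (p : G.Walk u v) (q : G.Walk v u), p.IsPath ∧ q.IsPath ∧ (p.append q).IsCycle ∧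
      ∀ e, e ∈ (p.append q).edges ↔ e ∈ c.edges := by
  have hc' : (c.rotate u hu).IsCycle := hc.rotate hu
  have hv' : v ∈ (c.rotate u hu).support := (c.mem_support_rotate_iff u hu).mpr hv
  have hsplit := (c.rotate u hu).take_spec hv'
  refine ⟨_, _, hc'.isPath_takeUntil hv', ?_, hsplit ▸ hc', fun e => ?_⟩
  · exact (hsplit ▸ hc').isPath_of_append_right (not_nil_of_ne huv)
  · rw [hsplit]
    exact (c.rotate_edges u hu).perm.mem_iff

lemma IsCycle.exists_isCycle_and_avoiding_path {x u v : V} {c : G.Walk x x}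
    (hc : c.IsCycle) (hu : u ∈ c.support) (hv : v ∈ c.support) (huv : G.Adj u v)
    (hchord : s(u, v) ∉ c.edges) :
    ∃ (c' : G.Walk u u) (p : G.Walk u v), c'.IsCycle ∧ p.IsPath ∧
      (∀ e ∈ p.edges, e ∉ c'.edges) ∧ 2 ≤ p.length := by
  obtain ⟨p, q, hp, hq, hpq, hedges⟩ := hc.exists_isPath_append_isCycle hu hv huv.ne
  have hp_sub : ∀ e ∈ p.edges, e ∈ c.edges := fun e he =>
    (hedges e).mp (by rw [edges_append]; exact List.mem_append_left _ he)
  have hq_sub : ∀ e ∈ q.edges, e ∈ c.edges := fun e he =>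
    (hedges e).mp (by rw [edges_append]; exact List.mem_append_right _ he)
  have hdisj : p.edges.Disjoint q.edges := by
    have := hpq.edges_nodup
    rw [edges_append, List.nodup_append] at this
    exact fun e hep heq => this.2.2 e hep e heq rfl
  refine ⟨cons huv q, p, (cons_isCycle_iff q huv).mpr ⟨hq, fun h => hchord (hq_sub _ h)⟩,
    hp, fun e he he' => ?_, ?_⟩
  · rcases List.mem_cons.mp (edges_cons huv q ▸ he') with rfl | heq
    · exact hchord (hp_sub _ he)
    · exact hdisj he heq
  · have h0 : p.length ≠ 0 := fun h => huv.ne (eq_of_length_eq_zero h)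
    have h1 : p.length ≠ 1 := fun h => hchord (hp_sub _ (mk_mem_edges_of_length_eq_one h))
    omega

end SimpleGraph.Walk

namespace CMGraph

variable {V S : Type}

lemma mem_pend_self (G : CMGraph V S) (v : V) : v ∈ G.pend v :=
  SimpleGraph.Reachable.refl v

variable [Fintype V]

lemma npend_eq_zero_of_length_le_one (G : CMGraph V S) {u v : V} {p : G.toSimple.Walk u v}
    (hp : p.length ≤ 1) : G.npend p = 0 := by
  have : (p.support.drop 1).dropLast = [] := by
    apply List.eq_nil_of_length_eq_zero
    simp only [List.length_dropLast, List.length_drop, SimpleGraph.Walk.length_support]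
    omega
  rw [npend, this, List.map_nil, List.sum_nil]

lemma npend_pos_of_two_le_length (G : CMGraph V S) {u v : V} {p : G.toSimple.Walk u v}
    (hp : 2 ≤ p.length) : 0 < G.npend p := by
  have hlen : ((p.support.drop 1).dropLast).length = p.length - 1 := by
    simp only [List.length_dropLast, List.length_drop, SimpleGraph.Walk.length_support]
    omega
  obtain ⟨x, hx⟩ := List.exists_mem_of_length_pos (l := (p.support.drop 1).dropLast) (by omega)
  have hx_pos : 0 < (G.pend x).ncard := (Set.ncard_pos (Set.toFinite _)).mpr ⟨x, G.mem_pend_self x⟩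
  exact hx_pos.trans_le (List.le_sum_of_mem (List.mem_map_of_mem hx))

end CMGraph

theorem min_code_path_length_ge_two_general {V S : Type} [Fintype V] [DecidableEq V]
    (H : CMGraph V S)
    (u v : V) (hne : u ≠ v) (hu : H.IsJunction u) (hv : H.IsJunction v)
    (r : V → ℕ)
    (w : V) (cstar : H.toSimple.Walk w w) (hcy : cstar.IsCycle)
    (pstar : H.toSimple.Walk u v) (hav : H.Avoids pstar cstar)
    (hmin : ∀ (w' : V) (c' : H.toSimple.Walk w' w') (p' : H.toSimple.Walk u v),
      c'.IsCycle → H.Avoids p' c' →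
        listLe (H.pathCode r pstar) (H.pathCode r p')) :
    2 ≤ pstar.length := by
  by_contra! hshort
  have hlen : pstar.length = 1 := by
    have : pstar.length ≠ 0 := fun h => hne (SimpleGraph.Walk.eq_of_length_eq_zero h)
    omega
  have hedge := SimpleGraph.Walk.mk_mem_edges_of_length_eq_one hlen
  obtain ⟨c, p, hc, hp, hpc, hp2⟩ := hcy.exists_isCycle_and_avoiding_path (hu.2 w cstar hcy)
    (hv.2 w cstar hcy) (SimpleGraph.Walk.adj_of_length_eq_one hlen) (hav.2 _ hedge)
  have hfirst := head_le_of_listLe_cons (hmin u c p hc ⟨hp, hpc⟩)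
  have hcard : 0 < Nat.card V := Nat.card_pos_iff.mpr ⟨⟨u⟩, inferInstance⟩
  have := H.npend_pos_of_two_le_length hp2
  rw [H.npend_eq_zero_of_length_le_one hlen.le] at hfirst
  omega

/-- If the junctions u, v of a mono-block 2-augmented tree satisfy
(code(u), code*(u)) ≺ (code(v), code*(v)) strictly, then the avoiding path with
lexicographically minimum code has length at least 2. -/
theorem min_code_path_length_ge_two {V S : Type} [Fintype V] [DecidableEq V]
    [LinearOrder S] (H : CMGraph V S) (h : H.IsMB2AT)
    (u v : V) (hne : u ≠ v) (hu : H.IsJunction u) (hv : H.IsJunction v)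
    (r : V → ℕ) (hr : H.RankSpec r)
    (hlt : H.JCodeLt r u v)
    (w : V) (cstar : H.toSimple.Walk w w) (hcy : cstar.IsCycle)
    (pstar : H.toSimple.Walk u v) (hav : H.Avoids pstar cstar)
    (hmin : ∀ (w' : V) (c' : H.toSimple.Walk w' w') (p' : H.toSimple.Walk u v),
      c'.IsCycle → H.Avoids p' c' →
        listLe (H.pathCode r pstar) (H.pathCode r p')) :
    2 ≤ pstar.length :=
  min_code_path_length_ge_two_general H u v hne hu hv r w cstar hcy pstar hav hmin
end
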